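/- There is an absolute constant C > 0 such that the following holds for all n ≥ 1, all real k > 0, and all ε ∈ (0,1] satisfying k·ε²/n ≤ 1. Let (X, A) be a pair of random variables on {0,1} × ℕ where X is uniform on {0,1}, the conditional distribution of A given X=0 is Poisson(k/n), and the conditional distribution of A given X=1 is the even mixture (1/2)·Poisson(k(1+ε)/n) + (1/2)·Poisson(k(1−ε)/n). Then I(X;A) ≤ C·k²·ε⁴/n². -/

import Mathlib

/-
For uniform `X`, `I(X;A)` is the Jensen–Shannon divergence of the two conditional laws `p, q`
of `A`, and `log t ≤ t - 1` bounds it termwise by `(p - q)² / (2 p ln 2)`, i.e. by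
`χ²(q ‖ p) / (2 ln 2)`. For Poisson laws the χ² divergence is explicit, because
`∑ₐ P_μ(a) P_ν(a) / P_λ(a) = exp ((μ - λ)(ν - λ) / λ)` is again an exponential series. With
`λ = k/n` and `μ, ν = λ(1 ± ε)` this gives `χ² = cosh t - 1` for `t = kε²/n ≤ 1`, and
`cosh t - 1 ≤ 3t²/4` yields `I(X;A) ≤ t²`.
-/

/-- The Poisson probability mass function with rate `lam`. -/
noncomputable def poissonPMF (lam : ℝ) (k : ℕ) : ℝ :=
  Real.exp (-lam) * lam ^ k / (Nat.factorial k)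

/-- Mutual information (in bits) of a joint distribution `mu` of a pair `(X, A)` with values
in `{0,1} × ℕ`; terms where the joint probability is `0` contribute `0`
(automatic since `0 * log 0 = 0`). -/
noncomputable def mutualInfoBoolNat (mu : Bool × ℕ → ℝ) : ℝ :=
  ∑' z : Bool × ℕ,
    mu z * Real.logb 2 (mu z / ((∑' a : ℕ, mu (z.1, a)) * (mu (false, z.2) + mu (true, z.2))))

/-- The joint distribution of `(X, A)` where `X` is uniform on `{0,1}`, `A | X=0` is
`Poisson(k/n)`, and `A | X=1` is the even mixture of `Poisson(k(1+ε)/n)` and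
`Poisson(k(1−ε)/n)`. -/
noncomputable def muEleven (n : ℕ) (k ε : ℝ) : Bool × ℕ → ℝ := fun z =>
  if z.1 then
    (1/2) * ((1/2) * poissonPMF (k * (1 + ε) / n) z.2
      + (1/2) * poissonPMF (k * (1 - ε) / n) z.2)
  else (1/2) * poissonPMF (k / n) z.2

open Real

theorem HasSum.bool_prod {α M : Type*} [AddCommMonoid M] [TopologicalSpace M] [ContinuousAdd M]
    {f : Bool × α → M} {x y : M} (h₀ : HasSum (fun a => f (false, a)) x)
    (h₁ : HasSum (fun a => f (true, a)) y) : HasSum f (x + y) :=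
  (Equiv.boolProdEquivSum α).symm.hasSum_iff.mp (h₀.sum h₁)

namespace Real

theorem cosh_sub_one_le {x : ℝ} (hx : |x| ≤ 1) : cosh x - 1 ≤ 3 / 4 * x ^ 2 := by
  have hsq : x ^ 2 ≤ 1 := by rw [← sq_abs]; exact pow_le_one₀ (abs_nonneg x) hx
  have hy : |x ^ 2 / 2| ≤ 1 := by rw [abs_of_nonneg (by positivity)]; linarith
  have hexp := (abs_le.mp (abs_exp_sub_one_sub_id_le hy)).2
  have hcosh := cosh_le_exp_half_sq x
  nlinarith [sq_nonneg x]

theorem mul_log_div_le {x m : ℝ} (hx : 0 ≤ x) (hm : 0 < m) :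
    x * log (x / m) ≤ x * (x / m - 1) := by
  rcases hx.eq_or_lt with rfl | hx
  · simp
  exact mul_le_mul_of_nonneg_left (log_le_sub_one_of_pos (by positivity)) hx.le

theorem abs_mul_log_div_le {x m : ℝ} (hx : 0 ≤ x) (hxm : x ≤ 2 * m) :
    |x * log (x / m)| ≤ x + m := by
  rcases hx.eq_or_lt with rfl | hx
  · simp; linarith
  have hm : 0 < m := by linarith
  have hupper := mul_log_div_le hx.le hm
  have hlower : x * (1 - m / x) ≤ x * log (x / m) := by
    refine mul_le_mul_of_nonneg_left ?_ hx.le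
    have := one_sub_inv_le_log_of_pos (div_pos hx hm)
    rwa [inv_div] at this
  have hxm' : x * (x / m - 1) ≤ x := by
    have : x / m ≤ 2 := (div_le_iff₀ hm).mpr (by linarith)
    nlinarith
  have : x * (1 - m / x) = x - m := by field_simp
  rw [abs_le]; constructor <;> linarith

end Real

noncomputable def jensenShannonSummand (x y : ℝ) : ℝ :=
  (x * log (x / ((x + y) / 2)) + y * log (y / ((x + y) / 2))) / (2 * log 2)

theorem jensenShannonSummand_le {x y : ℝ} (hx : 0 < x) (hy : 0 ≤ y) :
    jensenShannonSummand x y ≤ (x - y) ^ 2 / x / (2 * log 2) := by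
  have hm : 0 < (x + y) / 2 := by positivity
  have hchi : x * (x / ((x + y) / 2) - 1) + y * (y / ((x + y) / 2) - 1)
      = (x - y) ^ 2 / (x + y) := by
    field_simp; ring
  have hweaken : (x - y) ^ 2 / (x + y) ≤ (x - y) ^ 2 / x :=
    div_le_div_of_nonneg_left (sq_nonneg _) hx (by linarith)
  unfold jensenShannonSummand
  gcongr
  linarith [mul_log_div_le hx.le hm, mul_log_div_le hy hm]

theorem summable_mul_log_div_avg {p q : ℕ → ℝ} (hp : ∀ a, 0 ≤ p a) (hq : ∀ a, 0 ≤ q a)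
    (hps : Summable p) (hqs : Summable q) :
    Summable fun a => p a * log (p a / ((p a + q a) / 2)) := by
  refine Summable.of_norm_bounded (g := fun a => p a + (p a + q a) / 2)
    (hps.add ((hps.add hqs).div_const 2)) fun a => ?_
  exact abs_mul_log_div_le (hp a) (by linarith [hq a])

theorem hasSum_sq_sub_div {p q : ℕ → ℝ} {s : ℝ} (hp : ∀ a, p a ≠ 0) (hp1 : HasSum p 1)
    (hq1 : HasSum q 1) (hs : HasSum (fun a => q a ^ 2 / p a) s) :
    HasSum (fun a => (p a - q a) ^ 2 / p a) (s - 1) := by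
  have hexpand : (fun a => (p a - q a) ^ 2 / p a) = fun a => p a - 2 * q a + q a ^ 2 / p a := by
    ext a
    field_simp [hp a]
    ring
  rw [hexpand, show s - 1 = 1 - 2 * 1 + s by ring]
  exact (hp1.sub (hq1.mul_left 2)).add hs

noncomputable def uniformBoolJoint (p q : ℕ → ℝ) : Bool × ℕ → ℝ := fun z =>
  if z.1 then 1 / 2 * q z.2 else 1 / 2 * p z.2

theorem hasSum_mutualInfoBoolNat_uniformBoolJoint {p q : ℕ → ℝ} (hp : ∀ a, 0 ≤ p a)
    (hq : ∀ a, 0 ≤ q a) (hp1 : HasSum p 1) (hq1 : HasSum q 1) :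
    HasSum (fun a => jensenShannonSummand (p a) (q a))
      (mutualInfoBoolNat (uniformBoolJoint p q)) := by
  have hfalse : ∀ a, uniformBoolJoint p q (false, a) = 1 / 2 * p a := fun _ => rfl
  have htrue : ∀ a, uniformBoolJoint p q (true, a) = 1 / 2 * q a := fun _ => rfl
  have hmarg₀ : ∑' a, uniformBoolJoint p q (false, a) = 1 / 2 := by
    simp only [hfalse, (hp1.mul_left _).tsum_eq, mul_one]
  have hmarg₁ : ∑' a, uniformBoolJoint p q (true, a) = 1 / 2 := by
    simp only [htrue, (hq1.mul_left _).tsum_eq, mul_one]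
  have hslice : ∀ x y : ℝ, 1 / 2 * x * logb 2 (1 / 2 * x / (1 / 2 * (1 / 2 * x + 1 / 2 * y)))
      = x * log (x / ((x + y) / 2)) / (2 * log 2) := by
    intro x y
    rw [show 1 / 2 * (1 / 2 * x + 1 / 2 * y) = 1 / 2 * ((x + y) / 2) by ring,
      mul_div_mul_left _ _ (by norm_num), logb]
    ring
  have hs₀ := (summable_mul_log_div_avg hp hq hp1.summable
    hq1.summable).div_const (2 * log 2)
  have hs₁ := (summable_mul_log_div_avg hq hp hq1.summable
    hp1.summable).div_const (2 * log 2)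
  set F : Bool × ℕ → ℝ := fun z => uniformBoolJoint p q z * logb 2 (uniformBoolJoint p q z
      / ((∑' a, uniformBoolJoint p q (z.1, a))
        * (uniformBoolJoint p q (false, z.2) + uniformBoolJoint p q (true, z.2)))) with hF_def
  have hF₀ : ∀ a, F (false, a) = p a * log (p a / ((p a + q a) / 2)) / (2 * log 2) := by
    intro a
    rw [hF_def]
    dsimp only
    rw [hfalse, htrue, hmarg₀, hslice]
  have hF₁ : ∀ a, F (true, a) = q a * log (q a / ((q a + p a) / 2)) / (2 * log 2) := by
    intro a
    rw [hF_def]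
    dsimp only
    rw [hfalse, htrue, hmarg₁, add_comm (1 / 2 * p a), hslice]
  have hF := HasSum.bool_prod (f := F) (by simpa only [hF₀] using hs₀.hasSum)
    (by simpa only [hF₁] using hs₁.hasSum)
  have hsummand : (fun a => jensenShannonSummand (p a) (q a)) = fun a =>
      p a * log (p a / ((p a + q a) / 2)) / (2 * log 2)
        + q a * log (q a / ((q a + p a) / 2)) / (2 * log 2) := by
    ext a
    rw [jensenShannonSummand, add_div, add_comm (q a) (p a)]
  rw [mutualInfoBoolNat, ← hF_def, hF.tsum_eq, hsummand]
  exact hs₀.hasSum.add hs₁.hasSum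

theorem poissonPMF_nonneg {lam : ℝ} (hlam : 0 ≤ lam) (a : ℕ) : 0 ≤ poissonPMF lam a := by
  unfold poissonPMF; positivity

theorem poissonPMF_pos {lam : ℝ} (hlam : 0 < lam) (a : ℕ) : 0 < poissonPMF lam a := by
  unfold poissonPMF; positivity

theorem hasSum_poissonPMF (lam : ℝ) : HasSum (poissonPMF lam) 1 := by
  have h := (NormedSpace.expSeries_div_hasSum_exp lam).mul_left (exp (-lam))
  rw [← exp_eq_exp_ℝ, ← exp_add, neg_add_cancel, exp_zero] at h
  have hpmf : poissonPMF lam = fun a => exp (-lam) * (lam ^ a / a.factorial) := by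
    ext a
    rw [poissonPMF, mul_div_assoc]
  rwa [hpmf]

theorem hasSum_poissonPMF_mul_div {lam : ℝ} (hlam : 0 < lam) (μ ν : ℝ) :
    HasSum (fun a => poissonPMF μ a * poissonPMF ν a / poissonPMF lam a)
      (exp ((μ - lam) * (ν - lam) / lam)) := by
  have hterm : ∀ a : ℕ, poissonPMF μ a * poissonPMF ν a / poissonPMF lam a
      = exp (lam - μ - ν) * ((μ * ν / lam) ^ a / a.factorial) := by
    intro a
    have hexp : exp (lam - μ - ν) = exp (-μ) * exp (-ν) / exp (-lam) := by
      rw [← exp_add, ← exp_sub]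
      ring_nf
    have : (a.factorial : ℝ) ≠ 0 := Nat.cast_ne_zero.mpr a.factorial_ne_zero
    simp only [poissonPMF]
    rw [hexp, div_pow, mul_pow]
    field_simp
  have hexponent : (μ - lam) * (ν - lam) / lam = lam - μ - ν + μ * ν / lam := by
    field_simp
    ring
  have h := (NormedSpace.expSeries_div_hasSum_exp (μ * ν / lam)).mul_left (exp (lam - μ - ν))
  rw [← exp_eq_exp_ℝ, ← exp_add] at h
  simpa only [hexponent, hterm] using h

noncomputable def poissonSymmMixture (lam δ : ℝ) (a : ℕ) : ℝ :=
  1 / 2 * poissonPMF (lam + δ) a + 1 / 2 * poissonPMF (lam - δ) a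

theorem poissonSymmMixture_nonneg {lam δ : ℝ} (hδ : |δ| ≤ lam) (a : ℕ) :
    0 ≤ poissonSymmMixture lam δ a := by
  obtain ⟨h₁, h₂⟩ := abs_le.mp hδ
  unfold poissonSymmMixture
  have := poissonPMF_nonneg (lam := lam + δ) (by linarith) a
  have := poissonPMF_nonneg (lam := lam - δ) (by linarith) a
  positivity

theorem hasSum_poissonSymmMixture (lam δ : ℝ) : HasSum (poissonSymmMixture lam δ) 1 := by
  have h := ((hasSum_poissonPMF (lam + δ)).mul_left (1 / 2)).add
    ((hasSum_poissonPMF (lam - δ)).mul_left (1 / 2))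
  rwa [show (1 : ℝ) / 2 * 1 + 1 / 2 * 1 = 1 by norm_num] at h

theorem hasSum_sq_poissonSymmMixture_div {lam : ℝ} (hlam : 0 < lam) (δ : ℝ) :
    HasSum (fun a => poissonSymmMixture lam δ a ^ 2 / poissonPMF lam a) (cosh (δ ^ 2 / lam)) := by
  have hplus := hasSum_poissonPMF_mul_div hlam (lam + δ) (lam + δ)
  have hminus := hasSum_poissonPMF_mul_div hlam (lam - δ) (lam - δ)
  have hcross := hasSum_poissonPMF_mul_div hlam (lam + δ) (lam - δ)
  have hsquare : (fun a => poissonSymmMixture lam δ a ^ 2 / poissonPMF lam a) = fun a =>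
      (poissonPMF (lam + δ) a * poissonPMF (lam + δ) a / poissonPMF lam a
        + poissonPMF (lam - δ) a * poissonPMF (lam - δ) a / poissonPMF lam a) / 4
      + poissonPMF (lam + δ) a * poissonPMF (lam - δ) a / poissonPMF lam a / 2 := by
    ext a
    unfold poissonSymmMixture
    ring
  have hvalue : cosh (δ ^ 2 / lam) = (exp ((lam + δ - lam) * (lam + δ - lam) / lam)
      + exp ((lam - δ - lam) * (lam - δ - lam) / lam)) / 4
      + exp ((lam + δ - lam) * (lam - δ - lam) / lam) / 2 := by
    rw [cosh_eq]
    ring_nf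
  rw [hsquare, hvalue]
  exact ((hplus.add hminus).div_const 4).add (hcross.div_const 2)

theorem mutualInfoBoolNat_poissonSymmMixture_le {lam δ : ℝ} (hlam : 0 < lam) (hδ : |δ| ≤ lam)
    (ht : δ ^ 2 / lam ≤ 1) :
    mutualInfoBoolNat (uniformBoolJoint (poissonPMF lam) (poissonSymmMixture lam δ))
      ≤ (δ ^ 2 / lam) ^ 2 := by
  set t := δ ^ 2 / lam
  have hMI := hasSum_mutualInfoBoolNat_uniformBoolJoint (poissonPMF_nonneg hlam.le)
    (poissonSymmMixture_nonneg hδ) (hasSum_poissonPMF lam) (hasSum_poissonSymmMixture lam δ)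
  have hchi := hasSum_sq_sub_div (fun a => (poissonPMF_pos hlam a).ne') (hasSum_poissonPMF lam)
    (hasSum_poissonSymmMixture lam δ) (hasSum_sq_poissonSymmMixture_div hlam δ)
  have hJS := hasSum_le (fun a => jensenShannonSummand_le (poissonPMF_pos hlam a)
    (poissonSymmMixture_nonneg hδ a)) hMI (hchi.div_const (2 * log 2))
  have ht_abs : |t| ≤ 1 := abs_le.mpr ⟨by linarith [div_nonneg (sq_nonneg δ) hlam.le], ht⟩
  have hlog2 := log_two_gt_d9
  calc _ ≤ (cosh t - 1) / (2 * log 2) := hJS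
    _ ≤ 3 / 4 * t ^ 2 / (2 * log 2) := by gcongr; exact cosh_sub_one_le ht_abs
    _ ≤ t ^ 2 := by
      rw [div_le_iff₀ (by positivity)]
      nlinarith [sq_nonneg t]

theorem stmt11 : ∃ C : ℝ, 0 < C ∧
    ∀ (n : ℕ), 1 ≤ n → ∀ (k : ℝ), 0 < k → ∀ (ε : ℝ), ε ∈ Set.Ioc (0:ℝ) 1 →
      k * ε ^ 2 / n ≤ 1 →
      mutualInfoBoolNat (muEleven n k ε) ≤ C * k ^ 2 * ε ^ 4 / (n : ℝ) ^ 2 := by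
  refine ⟨1, one_pos, fun n hn k hk ε ⟨hε₀, hε₁⟩ hkε => ?_⟩
  have hn₀ : (0 : ℝ) < n := by exact_mod_cast hn
  have hlam : 0 < k / n := div_pos hk hn₀
  have hδ : |k * ε / n| ≤ k / n := by
    rw [abs_of_pos (by positivity)]
    gcongr
    exact mul_le_of_le_one_right hk.le hε₁
  have ht : (k * ε / n) ^ 2 / (k / n) = k * ε ^ 2 / n := by
    field_simp
  have hmu : muEleven n k ε
      = uniformBoolJoint (poissonPMF (k / n)) (poissonSymmMixture (k / n) (k * ε / n)) := by
    unfold muEleven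
    rw [show k * (1 + ε) / n = k / n + k * ε / n by ring,
      show k * (1 - ε) / n = k / n - k * ε / n by ring]
    rfl
  calc mutualInfoBoolNat (muEleven n k ε) ≤ (k * ε ^ 2 / n) ^ 2 := by
        rw [hmu, ← ht]
        exact mutualInfoBoolNat_poissonSymmMixture_le hlam hδ (ht ▸ hkε)
    _ = 1 * k ^ 2 * ε ^ 4 / (n : ℝ) ^ 2 := by ring
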